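/- Let c₁, c₂, c₃, c₄ ≥ 0, define η_t = 2/(t+2) for integers t ≥ 0, and let (δ_t)_{t≥0} be a nonnegative real sequence with δ_{t+1} ≤ (1 − η_t)·δ_t + c₁·η_t² + c₂·η_t^{3/2} + c₃·η_t + c₄·η_t^{1/2} for all t ≥ 0. Then for every integer T ≥ 1: δ_T ≤ δ_0/(T+1)² + 4c₁/(T+1) + 4c₂/(T+1)^{1/2} + 2c₃ + 4c₄·(T+1)^{1/2}. -/

import Mathlib

/-!
Write `s = t + 1`, so that `η_t = 2 / (s + 1)`, and let `B(s)` be the claimed bound at `T = s - 1`.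
Since `1 - η_t ≥ 0`, the recursion propagates `δ_t ≤ B(t + 1)` to `δ_{t+1} ≤ B(t + 2)` as soon as
`(1 - η) B(s) + c₁ η² + c₂ η^{3/2} + c₃ η + c₄ η^{1/2} ≤ B(s + 1)`, and this splits into one
inequality per summand of `B`, the term in `c_i` absorbing the `i`-th error term. Each of these is
elementary; for the two square-root terms it comes down to `(s - 1) √(s + 1) ≤ s √s` and
`√s ≤ √(s + 1)`, with `√2 ≤ 2` absorbing the constants. At `s = 1` the bound is trivial.
-/

open Real

theorem le_of_le_affine_recurrence {δ B a g : ℕ → ℝ} (ha : ∀ t, 0 ≤ a t)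
    (hδ : ∀ t, δ (t + 1) ≤ a t * δ t + g t) (hB : ∀ t, a t * B t + g t ≤ B (t + 1))
    (h0 : δ 0 ≤ B 0) : ∀ t, δ t ≤ B t
  | 0 => h0
  | t + 1 => calc
      δ (t + 1) ≤ a t * δ t + g t := hδ t
      _ ≤ a t * B t + g t := by gcongr; exacts [ha t, le_of_le_affine_recurrence ha hδ hB h0 t]
      _ ≤ B (t + 1) := hB t

theorem rpow_three_halves_eq_mul_sqrt {x : ℝ} (hx : 0 ≤ x) : x ^ ((3 : ℝ) / 2) = x * √x := by
  rw [sqrt_eq_rpow, ← rpow_one_add' hx (by norm_num)]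
  norm_num

namespace GapRecursion

variable {s : ℝ}

theorem one_sub_two_div_add_one (hs : 0 < s) : 1 - 2 / (s + 1) = (s - 1) / (s + 1) := by
  field_simp; ring

theorem inv_sq_step (hs : 0 < s) : (1 - 2 / (s + 1)) * (1 / s ^ 2) ≤ 1 / (s + 1) ^ 2 := by
  rw [one_sub_two_div_add_one hs, div_mul_div_comm, div_le_div_iff₀ (by positivity) (by positivity)]
  nlinarith

theorem inv_step (hs : 0 < s) : (1 - 2 / (s + 1)) * (4 / s) + (2 / (s + 1)) ^ 2 ≤ 4 / (s + 1) := by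
  rw [one_sub_two_div_add_one hs, div_mul_div_comm, div_pow,
    div_add_div _ _ (by positivity) (by positivity), div_le_div_iff₀ (by positivity) (by positivity)]
  nlinarith

theorem sub_one_div_sqrt_le (hs : 1 ≤ s) : (s - 1) / √s ≤ s / √(s + 1) := by
  rw [div_le_div_iff₀ (sqrt_pos.2 (by linarith)) (sqrt_pos.2 (by linarith))]
  refine (pow_le_pow_iff_left₀ (mul_nonneg (by linarith) (sqrt_nonneg _)) (by positivity)
    two_ne_zero).mp ?_
  rw [mul_pow, mul_pow, sq_sqrt (by linarith), sq_sqrt (by linarith)]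
  nlinarith

theorem inv_sqrt_step (hs : 1 ≤ s) :
    (1 - 2 / (s + 1)) * (4 / √s) + 2 / (s + 1) * √(2 / (s + 1)) ≤ 4 / √(s + 1) := by
  have hsqrt_two : √2 ≤ 2 := by linarith [sqrt_two_lt_three_halves]
  calc (1 - 2 / (s + 1)) * (4 / √s) + 2 / (s + 1) * √(2 / (s + 1))
      = (4 * ((s - 1) / √s) + 2 * √2 / √(s + 1)) / (s + 1) := by
        rw [one_sub_two_div_add_one (by linarith), sqrt_div' _ (by linarith)]; ring
    _ ≤ (4 * (s / √(s + 1)) + 2 * 2 / √(s + 1)) / (s + 1) := by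
        gcongr (4 * ?_ + 2 * ?_ / _) / _
        exact sub_one_div_sqrt_le hs
    _ = 4 / √(s + 1) := by field_simp; ring

theorem sqrt_step (hs : 1 ≤ s) :
    (1 - 2 / (s + 1)) * (4 * √s) + √(2 / (s + 1)) ≤ 4 * √(s + 1) := by
  have hsqrt_two : √2 ≤ 2 := by linarith [sqrt_two_lt_three_halves]
  have hmono : √s ≤ √(s + 1) := sqrt_le_sqrt (by linarith)
  calc (1 - 2 / (s + 1)) * (4 * √s) + √(2 / (s + 1))
      = (4 * (s - 1) * √s + √2 * √(s + 1)) / (s + 1) := by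
        rw [one_sub_two_div_add_one (by linarith), sqrt_div' _ (by linarith)]
        field_simp
        linear_combination -√2 * sq_sqrt (show 0 ≤ s + 1 by linarith)
    _ ≤ (4 * (s - 1) * √(s + 1) + 2 * √(s + 1)) / (s + 1) := by
        gcongr
    _ ≤ 4 * √(s + 1) := by
        rw [div_le_iff₀ (by linarith)]
        nlinarith [sqrt_nonneg (s + 1)]

end GapRecursion

open GapRecursion

noncomputable def gapForcing (c₁ c₂ c₃ c₄ η : ℝ) : ℝ :=
  c₁ * η ^ 2 + c₂ * (η * √η) + c₃ * η + c₄ * √η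

noncomputable def gapBound (δ₀ c₁ c₂ c₃ c₄ s : ℝ) : ℝ :=
  δ₀ / s ^ 2 + 4 * c₁ / s + 4 * c₂ / √s + 2 * c₃ + 4 * c₄ * √s

theorem gapBound_step {δ₀ c₁ c₂ c₃ c₄ s : ℝ} (hδ₀ : 0 ≤ δ₀) (hc₁ : 0 ≤ c₁) (hc₂ : 0 ≤ c₂)
    (hc₃ : 0 ≤ c₃) (hc₄ : 0 ≤ c₄) (hs : 1 ≤ s) :
    (1 - 2 / (s + 1)) * gapBound δ₀ c₁ c₂ c₃ c₄ s + gapForcing c₁ c₂ c₃ c₄ (2 / (s + 1))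
      ≤ gapBound δ₀ c₁ c₂ c₃ c₄ (s + 1) := by
  have hs₀ : 0 < s := by linarith
  have h₀ := mul_le_mul_of_nonneg_left (inv_sq_step hs₀) hδ₀
  have h₁ := mul_le_mul_of_nonneg_left (inv_step hs₀) hc₁
  have h₂ := mul_le_mul_of_nonneg_left (inv_sqrt_step hs) hc₂
  have h₄ := mul_le_mul_of_nonneg_left (sqrt_step hs) hc₄
  have h₃ : 0 ≤ c₃ * (2 / (s + 1)) := by positivity
  unfold gapBound gapForcing
  linear_combination h₀ + h₁ + h₂ + h₃ + h₄

theorem stmt_11 (c₁ c₂ c₃ c₄ : ℝ)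
    (hc₁ : 0 ≤ c₁) (hc₂ : 0 ≤ c₂) (hc₃ : 0 ≤ c₃) (hc₄ : 0 ≤ c₄)
    (δ : ℕ → ℝ) (hδ : ∀ t, 0 ≤ δ t)
    (hrec : ∀ t : ℕ, δ (t + 1) ≤ (1 - 2 / ((t : ℝ) + 2)) * δ t
      + c₁ * (2 / ((t : ℝ) + 2)) ^ 2 + c₂ * (2 / ((t : ℝ) + 2)) ^ ((3 : ℝ) / 2)
      + c₃ * (2 / ((t : ℝ) + 2)) + c₄ * (2 / ((t : ℝ) + 2)) ^ ((1 : ℝ) / 2)) :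
    ∀ T : ℕ, 1 ≤ T →
      δ T ≤ δ 0 / ((T : ℝ) + 1) ^ 2 + 4 * c₁ / ((T : ℝ) + 1)
        + 4 * c₂ / ((T : ℝ) + 1) ^ ((1 : ℝ) / 2) + 2 * c₃
        + 4 * c₄ * ((T : ℝ) + 1) ^ ((1 : ℝ) / 2) := by
  intro T _
  have hrec' (t : ℕ) : δ (t + 1) ≤
      (1 - 2 / ((t : ℝ) + 2)) * δ t + gapForcing c₁ c₂ c₃ c₄ (2 / ((t : ℝ) + 2)) := by
    have h := hrec t
    rw [rpow_three_halves_eq_mul_sqrt (by positivity), ← sqrt_eq_rpow] at h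
    unfold gapForcing
    linarith
  have hcontr (t : ℕ) : 0 ≤ 1 - 2 / ((t : ℝ) + 2) :=
    sub_nonneg.2 <| (div_le_one (by positivity)).2 (by linarith [t.cast_nonneg (α := ℝ)])
  have hstep (t : ℕ) : (1 - 2 / ((t : ℝ) + 2)) * gapBound (δ 0) c₁ c₂ c₃ c₄ ((t : ℝ) + 1)
      + gapForcing c₁ c₂ c₃ c₄ (2 / ((t : ℝ) + 2))
      ≤ gapBound (δ 0) c₁ c₂ c₃ c₄ (((t + 1 : ℕ) : ℝ) + 1) := by
    have h := gapBound_step (hδ 0) hc₁ hc₂ hc₃ hc₄ (le_add_of_nonneg_left t.cast_nonneg)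
    rwa [Nat.cast_succ, show (t : ℝ) + 2 = t + 1 + 1 by ring]
  have hbound := le_of_le_affine_recurrence hcontr hrec' hstep (by
    simp only [gapBound, Nat.cast_zero, zero_add, one_pow, div_one, sqrt_one, mul_one]
    linarith) T
  simpa [gapBound, sqrt_eq_rpow] using hbound
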